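/- Let A be a countable group and A ⊇ A_0 ⊇ A_1 ⊇ ⋯ a decreasing sequence of subgroups with infinitely many of the A_n distinct. Then lim¹ of the inverse system (A_n) (with inclusion transition maps) is uncountable. -/

import Mathlib

section Lim1Defs

variable {A : ℕ → Type} [∀ n, Group (A n)]

/-- The relation on `∏ n, A n` whose orbit space is `lim¹ A n`:
`(a_n)` acts on `(x_n)` by `(a_n * x_n * (u_{n+1} a_{n+1})⁻¹)_n`. -/
def lim1Rel (u : ∀ n, A (n + 1) →* A n) (x y : ∀ n, A n) : Prop :=
  ∃ a : ∀ n, A n, ∀ n, y n = a n * x n * (u n (a (n + 1)))⁻¹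

/-- `lim¹` of an inverse system of groups indexed by `ℕ`. -/
def Lim1 (u : ∀ n, A (n + 1) →* A n) : Type :=
  Quot (lim1Rel u)

/-- The composite transition map `A (m + n) →* A m` of an inverse system. -/
def transMap (u : ∀ n, A (n + 1) →* A n) (m : ℕ) : ∀ n, A (m + n) →* A m
  | 0 => MonoidHom.id _
  | n + 1 => (transMap u m n).comp (u (m + n))

/-- The Mittag-Leffler condition: for each `m`, the decreasing chain of images of the `A n`
in `A m` is eventually constant. -/
def MittagLeffler (u : ∀ n, A (n + 1) →* A n) : Prop :=
  ∀ m, ∃ N, ∀ n, N ≤ n → Set.range ⇑(transMap u m n) = Set.range ⇑(transMap u m N)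

end Lim1Defs

/-!
Write `P x n = x 0 * ⋯ * x (n - 1)` for the partial products of a sequence `x` with `x n ∈ S n`.
If `a` relates `x` to `y`, then `P y n * a n = a 0 * P x n`, so the single element `g = a 0` of
the countable group `G` satisfies `(P y n)⁻¹ * g * P x n ∈ S n` for all `n`. For `ε` ranging over
the (uncountably many) sets of indices where the chain drops, let `x_ε n` be a chosen element of
`S n \ S (n + 1)` when `n ∈ ε` and `1` otherwise; comparing `P x_ε` and `P x_δ` at the first index
where `ε` and `δ` differ shows that `g` determines `ε` within a class. So every class meets only
countably many of the `x_ε`, and there are uncountably many classes.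
-/

open Cardinal

section PartialProd

variable {G : Type*} [Group G]

def partialProd (x : ℕ → G) : ℕ → G
  | 0 => 1
  | n + 1 => partialProd x n * x n

theorem partialProd_congr {x y : ℕ → G} {n : ℕ} (h : ∀ m < n, x m = y m) :
    partialProd x n = partialProd y n := by
  induction n with
  | zero => rfl
  | succ n ih =>
    rw [partialProd, partialProd, ih fun m hm => h m (by omega), h n n.lt_succ_self]

end PartialProd

theorem lim1Rel_equivalence {A : ℕ → Type} [∀ n, Group (A n)] (u : ∀ n, A (n + 1) →* A n) :
    Equivalence (lim1Rel u) where
  refl x := ⟨fun _ => 1, fun n => by simp⟩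
  symm := by
    rintro x y ⟨a, ha⟩
    exact ⟨fun n => (a n)⁻¹, fun n => by simp [ha n, mul_assoc]⟩
  trans := by
    rintro x y z ⟨a, ha⟩ ⟨b, hb⟩
    exact ⟨fun n => b n * a n, fun n => by simp [hb n, ha n, mul_assoc]⟩

theorem Uncountable.of_countable_fibers {α β : Type*} [Uncountable α] (f : α → β)
    (hf : ∀ a, {a' | f a' = f a}.Countable) : Uncountable β := by
  by_contra hβ
  have : Countable β := not_uncountable_iff.mp hβ
  have hcover : (Set.univ : Set α) ⊆ ⋃ b ∈ Set.range f, f ⁻¹' {b} :=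
    fun a _ => Set.mem_biUnion (Set.mem_range_self a) rfl
  refine Set.not_countable_univ (((Set.to_countable (Set.range f)).biUnion ?_).mono hcover)
  rintro _ ⟨a, rfl⟩
  exact hf a

theorem Set.Infinite.uncountable_powerset {α : Type*} {s : Set α} (hs : s.Infinite) :
    Uncountable (𝒫 s) := by
  rw [← aleph0_lt_mk_iff, mk_powerset]
  exact (aleph0_le_mk_iff.mpr hs.to_subtype).trans_lt (cantor _)

section SubgroupChain

variable {G : Type} [Group G] {S : ℕ → Subgroup G} (hdec : ∀ n, S (n + 1) ≤ S n)

local notation "incl" => fun n => Subgroup.inclusion (hdec n)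

theorem exists_conj_partialProd_mem_of_lim1Rel {x y : ∀ n, S n}
    (h : lim1Rel (A := fun n => S n) incl x y) :
    ∃ g : G, ∀ n, (partialProd (fun n => (y n : G)) n)⁻¹ * g * partialProd (fun n => (x n : G)) n
      ∈ S n := by
  obtain ⟨a, ha⟩ := h
  have hy : ∀ n, (y n : G) = a n * x n * (a (n + 1) : G)⁻¹ := fun n => congrArg Subtype.val (ha n)
  have key : ∀ n, partialProd (fun n => (y n : G)) n * a n
      = (a 0 : G) * partialProd (fun n => (x n : G)) n := by
    intro n
    induction n with
    | zero => simp [partialProd]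
    | succ n ih =>
      rw [partialProd, partialProd, hy n]
      calc _ = partialProd (fun n => (y n : G)) n * a n * x n := by group
        _ = _ := by rw [ih, mul_assoc]
  refine ⟨a 0, fun n => ?_⟩
  rw [mul_assoc, ← key, inv_mul_cancel_left]
  exact (a n).2

theorem uncountable_lim1_of_partialProd_separated [Countable G] {α : Type*} [Uncountable α]
    (x : α → ∀ n, S n)
    (hx : ∀ a b, (∀ n, (partialProd (fun n => (x a n : G)) n)⁻¹ *
      partialProd (fun n => (x b n : G)) n ∈ S n) → a = b) :
    Uncountable (Lim1 (A := fun n => S n) incl) := by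
  refine .of_countable_fibers (fun a => Quot.mk _ (x a)) fun a₀ => ?_
  let conjSet (g : G) : Set α := {a | ∀ n, (partialProd (fun n => (x a n : G)) n)⁻¹ * g *
    partialProd (fun n => (x a₀ n : G)) n ∈ S n}
  have hsub (g : G) : (conjSet g).Subsingleton := fun a ha b hb =>
    hx a b fun n => by simpa [mul_assoc] using mul_mem (ha n) (inv_mem (hb n))
  refine (Set.countable_iUnion fun g => (hsub g).countable).mono fun a ha => Set.mem_iUnion.mpr ?_
  have hrel := (lim1Rel_equivalence _).eqvGen_iff.mp (Quot.eqvGen_exact ha)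
  exact exists_conj_partialProd_mem_of_lim1Rel hdec ((lim1Rel_equivalence _).symm hrel)

end SubgroupChain

section Construction

variable {G : Type*} [Group G] {S : ℕ → Subgroup G} {s : Set ℕ} {t : ℕ → G}

theorem mulIndicator_mem_of_subset (ht : ∀ n ∈ s, t n ∈ S n) {ε : Set ℕ} (hε : ε ⊆ s) (n : ℕ) :
    ε.mulIndicator t n ∈ S n := by
  by_cases hn : n ∈ ε
  · rw [Set.mulIndicator_of_mem hn]
    exact ht n (hε hn)
  · rw [Set.mulIndicator_of_notMem hn]
    exact one_mem _

theorem eq_of_partialProd_mulIndicator_inv_mul_mem (ht : ∀ n ∈ s, t n ∉ S (n + 1))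
    {ε δ : Set ℕ} (hε : ε ⊆ s) (hδ : δ ⊆ s)
    (h : ∀ n, (partialProd (ε.mulIndicator t) n)⁻¹ * partialProd (δ.mulIndicator t) n ∈ S n) :
    ε = δ := by
  ext n
  induction n using Nat.strong_induction_on with
  | _ n ih =>
    have hP : partialProd (ε.mulIndicator t) n = partialProd (δ.mulIndicator t) n :=
      partialProd_congr fun m hm => by classical exact if_congr (ih m hm) rfl rfl
    have hstep : (ε.mulIndicator t n)⁻¹ * δ.mulIndicator t n ∈ S (n + 1) := by
      simpa [partialProd, hP, mul_assoc] using h (n + 1)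
    by_cases hεn : n ∈ ε <;> by_cases hδn : n ∈ δ
    · exact iff_of_true hεn hδn
    · rw [Set.mulIndicator_of_mem hεn, Set.mulIndicator_of_notMem hδn, mul_one,
        inv_mem_iff] at hstep
      exact absurd hstep (ht n (hε hεn))
    · rw [Set.mulIndicator_of_notMem hεn, Set.mulIndicator_of_mem hδn, inv_one, one_mul] at hstep
      exact absurd hstep (ht n (hδ hδn))
    · exact iff_of_false hεn hδn

end Construction

/-- Lemma i2: if `A` is a countable group and `A ⊇ A_0 ⊇ A_1 ⊇ ⋯` is a decreasing chain
of subgroups with infinitely many of the `A_n` distinct, then `lim¹` of the inverse system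
`(A_n)` (with inclusions as transition maps) is uncountable. -/
theorem statement_2 {G : Type} [Group G] [Countable G] (S : ℕ → Subgroup G)
    (hdec : ∀ n, S (n + 1) ≤ S n) (hinf : {n | S (n + 1) < S n}.Infinite) :
    Uncountable (Lim1 (A := fun n => ↥(S n)) (fun n => Subgroup.inclusion (hdec n))) := by
  choose! t ht_mem ht_not_mem using fun n (hn : S (n + 1) < S n) => SetLike.exists_of_lt hn
  have := hinf.uncountable_powerset
  refine uncountable_lim1_of_partialProd_separated hdec (α := 𝒫 {n | S (n + 1) < S n})
    (fun ε n => ⟨(ε : Set ℕ).mulIndicator t n, mulIndicator_mem_of_subset ht_mem ε.2 n⟩)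
    fun ε δ h => Subtype.ext ?_
  exact eq_of_partialProd_mulIndicator_inv_mul_mem ht_not_mem ε.2 δ.2 h
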